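/- arXiv:2006.07217 — 2 statements merged into one kernel-verified Lean document; each statement's English description precedes it below -/
import Mathlib

section
/- Let S be a nonempty finite set, let ρ : S → ℝ be a strictly positive probability vector (ρ(x) > 0 for all x and ∑_x ρ(x) = 1), and let 0 < ε ≤ 1. Let s, s' ∈ S, let T_{ss'} ∈ [0,1], let p(s') > 0 satisfy |p(s') − ρ(s')| ≤ (ε/2)·(min_x ρ(x))², and set ν_t = T_{ss'}/p(s') and ν_∞ = T_{ss'}/ρ(s'). If ν̃ ∈ ℝ satisfies |ν_t − ν̃| < ε, then |ν̃ − ν_∞| ≤ 2ε. -/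
/-!
Since `m := min ρ ≤ ρ s' ≤ 1`, the perturbation `|p - ρ s'| ≤ ε m² / 2 ≤ ρ s' / 2` keeps
`p ≥ ρ s' / 2`, so `p ρ s' ≥ m² / 2`. Hence
`|T/p - T/ρ s'| = |T| |p - ρ s'| / (p ρ s') ≤ (ε m² / 2) / (m² / 2) = ε`,
and the triangle inequality through `T/p` gives `2ε`.
-/

lemma half_le_of_abs_sub_le_mul_sq {p q m δ : ℝ} (hm : 0 ≤ m) (hmq : m ≤ q) (hq : q ≤ 1)
    (hδ : δ ≤ 1) (h : |p - q| ≤ δ / 2 * m ^ 2) : q / 2 ≤ p := by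
  have hm2 : m ^ 2 ≤ q := by nlinarith
  have hδm : δ / 2 * m ^ 2 ≤ m ^ 2 / 2 := by nlinarith [sq_nonneg m]
  linarith [neg_abs_le (p - q)]

lemma abs_div_sub_div_le_of_abs_sub_le_mul_sq {T p q m δ : ℝ} (hT : |T| ≤ 1) (hm : 0 < m)
    (hmq : m ≤ q) (hq : q ≤ 1) (hδ : δ ≤ 1) (h : |p - q| ≤ δ / 2 * m ^ 2) :
    |T / p - T / q| ≤ δ := by
  have hpq : q / 2 ≤ p := half_le_of_abs_sub_le_mul_sq hm.le hmq hq hδ h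
  have hq0 : 0 < q := hm.trans_le hmq
  have hp0 : 0 < p := by linarith
  have hprod : m ^ 2 / 2 ≤ p * q := by nlinarith
  calc |T / p - T / q| = |T| * |p - q| / (p * q) := by
        rw [div_sub_div _ _ hp0.ne' hq0.ne', abs_div, abs_of_pos (mul_pos hp0 hq0),
          show T * q - p * T = T * (q - p) by ring, abs_mul, abs_sub_comm q p]
    _ ≤ (δ / 2 * m ^ 2) / (m ^ 2 / 2) :=
        div_le_div₀ ((abs_nonneg _).trans h)
          ((mul_le_of_le_one_left (abs_nonneg _) hT).trans h) (by positivity) hprod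
    _ = δ := by field_simp

theorem prop1_scoring_close_to_stationary_ratio_general
    {S : Type*} [Fintype S] [Nonempty S]
    (ρ : S → ℝ) (hρpos : ∀ x, 0 < ρ x) (hρsum : ∑ x, ρ x = 1)
    (ε : ℝ) (hε1 : ε ≤ 1)
    (s' : S) (T : ℝ) (hT0 : 0 ≤ T) (hT1 : T ≤ 1)
    (p : ℝ)
    (hclose : |p - ρ s'| ≤ ε / 2 * (Finset.univ.inf' Finset.univ_nonempty ρ) ^ 2)
    (ν : ℝ) (hν : |T / p - ν| < ε) :
    |ν - T / ρ s'| ≤ 2 * ε := by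
  have hmin_pos : 0 < Finset.univ.inf' Finset.univ_nonempty ρ :=
    (Finset.lt_inf'_iff _).2 fun x _ => hρpos x
  have hρ_le_one : ρ s' ≤ 1 :=
    hρsum ▸ Finset.single_le_sum (fun x _ => (hρpos x).le) (Finset.mem_univ s')
  have hratio : |T / p - T / ρ s'| ≤ ε :=
    abs_div_sub_div_le_of_abs_sub_le_mul_sq (abs_le.2 ⟨by linarith, hT1⟩) hmin_pos
      (Finset.inf'_le ρ (Finset.mem_univ s')) hρ_le_one hε1 hclose
  calc |ν - T / ρ s'| ≤ |ν - T / p| + |T / p - T / ρ s'| := abs_sub_le _ _ _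
    _ ≤ ε + ε := add_le_add (abs_sub_comm ν _ ▸ hν.le) hratio
    _ = 2 * ε := (two_mul ε).symm

/-- Proposition 1 of the paper: closeness of the infoNCE scoring function to the
time-`t` ratio `ν_t = T/p`, together with closeness of the marginal `p` to the
stationary distribution `ρ`, implies closeness to the stationary ratio `ν_∞ = T/ρ s'`. -/
theorem prop1_scoring_close_to_stationary_ratio
    {S : Type*} [Fintype S] [Nonempty S]
    (ρ : S → ℝ) (hρpos : ∀ x, 0 < ρ x) (hρsum : ∑ x, ρ x = 1)
    (ε : ℝ) (hε0 : 0 < ε) (hε1 : ε ≤ 1)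
    (s s' : S) (T : ℝ) (hT0 : 0 ≤ T) (hT1 : T ≤ 1)
    (p : ℝ) (hp : 0 < p)
    (hclose : |p - ρ s'| ≤ ε / 2 * (Finset.univ.inf' Finset.univ_nonempty ρ) ^ 2)
    (ν : ℝ) (hν : |T / p - ν| < ε) :
    |ν - T / ρ s'| ≤ 2 * ε :=
  prop1_scoring_close_to_stationary_ratio_general ρ hρpos hρsum ε hε1 s' T hT0 hT1 p hclose ν hν
end

section
/- Let (q_i)_{i≥1} be a sequence of real numbers and let q_min, q_max be reals with 0 < q_min ≤ q_i ≤ q_max ≤ 1 for all i ≥ 1. Let X be the non-homogeneous geometric random variable with parameters (q_i), i.e. X takes value k ∈ {1,2,…} with probability P[X = k] = q_k · ∏_{i=1}^{k−1}(1 − q_i). Then the expectation E[X] = ∑_{k=1}^{∞} k · q_k · ∏_{i=1}^{k−1}(1 − q_i) satisfies 1/q_max ≤ E[X] ≤ 1/q_min. -/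
/-!
With `S n = ∏_{i=1}^{n} (1 - q_i) = P[X > n]`, Abel summation turns the partial sums of
`∑ k q_k S (k-1)` into `∑_{n<N} S n - N S N`. Since `S n ≤ (1 - q_min)^n`, the boundary term
vanishes and `E[X] = ∑_{n ≥ 0} S n`. Comparing `S n` termwise with `(1 - q_max)^n` and
`(1 - q_min)^n` and summing the geometric series gives the two bounds.
-/

open Finset Filter Topology

/-- `P[X > n]` for `X ∼ NHG(q 1, q 2, …)`; the value `q 0` never enters. -/
def nhgSurvival (q : ℕ → ℝ) (n : ℕ) : ℝ := ∏ i ∈ Icc 1 n, (1 - q i)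

section nhgSurvival

variable {q : ℕ → ℝ}

theorem nhgSurvival_succ (q : ℕ → ℝ) (n : ℕ) :
    nhgSurvival q (n + 1) = nhgSurvival q n * (1 - q (n + 1)) := by
  rw [nhgSurvival, nhgSurvival, prod_Icc_succ_top (Nat.le_add_left 1 n)]

theorem nhgSurvival_nonneg (hq : ∀ i, 1 ≤ i → q i ≤ 1) (n : ℕ) : 0 ≤ nhgSurvival q n :=
  prod_nonneg fun i hi => sub_nonneg.2 (hq i (mem_Icc.1 hi).1)

theorem pow_le_nhgSurvival {b : ℝ} (hb : b ≤ 1) (hq : ∀ i, 1 ≤ i → q i ≤ b) (n : ℕ) :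
    (1 - b) ^ n ≤ nhgSurvival q n :=
  calc (1 - b) ^ n = ∏ _i ∈ Icc 1 n, (1 - b) := by simp
    _ ≤ nhgSurvival q n :=
      prod_le_prod (fun _ _ => sub_nonneg.2 hb)
        fun i hi => sub_le_sub_left (hq i (mem_Icc.1 hi).1) 1

theorem nhgSurvival_le_pow {a : ℝ} (hq : ∀ i, 1 ≤ i → a ≤ q i ∧ q i ≤ 1) (n : ℕ) :
    nhgSurvival q n ≤ (1 - a) ^ n :=
  calc nhgSurvival q n ≤ ∏ _i ∈ Icc 1 n, (1 - a) :=
      prod_le_prod (fun i hi => sub_nonneg.2 (hq i (mem_Icc.1 hi).1).2)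
        fun i hi => sub_le_sub_left (hq i (mem_Icc.1 hi).1).1 1
    _ = (1 - a) ^ n := by simp

theorem sum_range_succ_mul_nhgSurvival (q : ℕ → ℝ) (n : ℕ) :
    ∑ k ∈ range (n + 1), (k : ℝ) * q k * nhgSurvival q (k - 1) =
      ∑ k ∈ range n, nhgSurvival q k - n * nhgSurvival q n := by
  induction n with
  | zero => simp
  | succ n ih =>
    rw [sum_range_succ, ih, sum_range_succ, Nat.add_sub_cancel, nhgSurvival_succ]
    push_cast
    ring

theorem hasSum_mul_nhgSurvival_of_tendsto (hq : ∀ i, 1 ≤ i → 0 ≤ q i ∧ q i ≤ 1)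
    (hS : Summable (nhgSurvival q))
    (hlim : Tendsto (fun n : ℕ => n * nhgSurvival q n) atTop (𝓝 0)) :
    HasSum (fun k : ℕ => (k : ℝ) * q k * nhgSurvival q (k - 1)) (∑' n, nhgSurvival q n) := by
  have hterm_nonneg : ∀ k : ℕ, 0 ≤ (k : ℝ) * q k * nhgSurvival q (k - 1) := by
    rintro (_ | k)
    · simp
    · exact mul_nonneg (mul_nonneg k.succ.cast_nonneg (hq _ k.succ_pos).1)
        (nhgSurvival_nonneg (fun i hi => (hq i hi).2) _)
  rw [hasSum_iff_tendsto_nat_of_nonneg hterm_nonneg, ← tendsto_add_atTop_iff_nat 1]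
  simp only [sum_range_succ_mul_nhgSurvival]
  simpa using hS.hasSum.tendsto_sum_nat.sub hlim

theorem summable_nhgSurvival {a : ℝ} (ha : 0 < a)
    (hq : ∀ i, 1 ≤ i → a ≤ q i ∧ q i ≤ 1) :
    Summable (nhgSurvival q) :=
  (summable_geometric_of_lt_one (by linarith [(hq 1 le_rfl).1, (hq 1 le_rfl).2])
    (by linarith)).of_nonneg_of_le (nhgSurvival_nonneg fun i hi => (hq i hi).2)
    (nhgSurvival_le_pow hq)

theorem hasSum_mul_nhgSurvival {a : ℝ} (ha : 0 < a)
    (hq : ∀ i, 1 ≤ i → a ≤ q i ∧ q i ≤ 1) :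
    HasSum (fun k : ℕ => (k : ℝ) * q k * nhgSurvival q (k - 1)) (∑' n, nhgSurvival q n) := by
  have hr₀ : 0 ≤ 1 - a := by linarith [(hq 1 le_rfl).1, (hq 1 le_rfl).2]
  have hr₁ : 1 - a < 1 := by linarith
  refine hasSum_mul_nhgSurvival_of_tendsto
    (fun i hi => ⟨ha.le.trans (hq i hi).1, (hq i hi).2⟩) (summable_nhgSurvival ha hq) ?_
  exact squeeze_zero
    (fun n => mul_nonneg n.cast_nonneg (nhgSurvival_nonneg (fun i hi => (hq i hi).2) n))
    (fun n => mul_le_mul_of_nonneg_left (nhgSurvival_le_pow hq n) n.cast_nonneg)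
    (tendsto_self_mul_const_pow_of_lt_one hr₀ hr₁)

end nhgSurvival

theorem tsum_one_sub_pow {a : ℝ} (ha₀ : 0 < a) (ha₁ : a ≤ 1) :
    ∑' n : ℕ, (1 - a) ^ n = 1 / a := by
  rw [tsum_geometric_of_lt_one (by linarith) (by linarith), sub_sub_cancel, one_div]

/-- Expectation bound for the non-homogeneous geometric distribution
(property (b) used by the paper's adaptive lookahead selection): if all
success probabilities `q_i` (for `i ≥ 1`) lie in `[q_min, q_max] ⊆ (0, 1]`,
then `1/q_max ≤ E[X] ≤ 1/q_min`, where
`E[X] = ∑_{k=1}^{∞} k · q_k · ∏_{i=1}^{k−1} (1 − q_i)`. -/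
theorem nhg_expectation_bounds
    (q : ℕ → ℝ) (qmin qmax : ℝ)
    (hqmin : 0 < qmin) (hqmax : qmax ≤ 1)
    (hq : ∀ i : ℕ, 1 ≤ i → qmin ≤ q i ∧ q i ≤ qmax) :
    1 / qmax ≤ ∑' k : ℕ, (k : ℝ) * q k * ∏ i ∈ Finset.Icc 1 (k - 1), (1 - q i) ∧
      ∑' k : ℕ, (k : ℝ) * q k * ∏ i ∈ Finset.Icc 1 (k - 1), (1 - q i) ≤ 1 / qmin := by
  have hq' : ∀ i, 1 ≤ i → qmin ≤ q i ∧ q i ≤ 1 :=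
    fun i hi => ⟨(hq i hi).1, (hq i hi).2.trans hqmax⟩
  have hqmin_le_qmax : qmin ≤ qmax := (hq 1 le_rfl).1.trans (hq 1 le_rfl).2
  have hS := summable_nhgSurvival hqmin hq'
  change 1 / qmax ≤ ∑' k : ℕ, (k : ℝ) * q k * nhgSurvival q (k - 1) ∧
    ∑' k : ℕ, (k : ℝ) * q k * nhgSurvival q (k - 1) ≤ 1 / qmin
  rw [(hasSum_mul_nhgSurvival hqmin hq').tsum_eq]
  constructor
  · calc 1 / qmax = ∑' n : ℕ, (1 - qmax) ^ n := (tsum_one_sub_pow (by linarith) hqmax).symm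
      _ ≤ ∑' n, nhgSurvival q n :=
        (summable_geometric_of_lt_one (by linarith) (by linarith)).tsum_le_tsum
          (pow_le_nhgSurvival hqmax fun i hi => (hq i hi).2) hS
  · calc ∑' n, nhgSurvival q n ≤ ∑' n : ℕ, (1 - qmin) ^ n :=
          hS.tsum_le_tsum (nhgSurvival_le_pow hq')
            (summable_geometric_of_lt_one (by linarith) (by linarith))
      _ = 1 / qmin := tsum_one_sub_pow hqmin (by linarith)
end
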